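/- In Algorithm 1 (virtual particle stochastic approximation), for every 0 ≤ k ≤ T, conditioned on the σ-algebra R_{k-1}, the random vectors X_k^{(1)},…,X_k^{(n)}, Y_k^{(k)}, Y_k^{(k+1)},…,Y_k^{(T)} are i.i.d.; in particular, conditioned on R_{T-1}, the outputs X_T^{(1)},…,X_T^{(n)} are i.i.d. with common conditional law μ_T|R_{T-1}. -/

import Mathlib

/-!
Up to step `k`, every real particle `X^{(i)}` and every virtual particle `Y^{(j)}` with `j ≥ k` is
the same measurable function of the variables generating `R_{k-1}` and of the particle's own seed:
its initial point and its first `k` Gaussian increments. These seeds, and the variables generating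
`R_{k-1}` (which involve only the draws of the virtual particles `Y^{(l)}`, `l < k`, and the `ξ_l`),
are built from pairwise disjoint groups of the independent draws. Hence the seeds are i.i.d. and
independent of `R_{k-1}`, and freezing `R_{k-1}` makes the particles conditionally i.i.d.
-/

open MeasureTheory ProbabilityTheory
open scoped ENNReal NNReal RealInnerProductSpace

noncomputable section

/-- `ℝᵈ` with the Euclidean norm. -/
abbrev EucSp (d : ℕ) := EuclideanSpace ℝ (Fin d)

/-- Real inner product on `ℝᵈ`. -/
def iprod {d : ℕ} (a b : EucSp d) : ℝ := inner ℝ a b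

/-- Squared 2-Wasserstein distance: infimum over couplings of `∫ ‖x - y‖²`. -/
def W2sq {d : ℕ} (μ ν : Measure (EucSp d)) : ℝ :=
  sInf {r : ℝ | ∃ γ : Measure (EucSp d × EucSp d),
    γ.map Prod.fst = μ ∧ γ.map Prod.snd = ν ∧ r = ∫ p, ‖p.1 - p.2‖ ^ 2 ∂γ}

/-- 2-Wasserstein distance. -/
def W2 {d : ℕ} (μ ν : Measure (EucSp d)) : ℝ := Real.sqrt (W2sq μ ν)

/-- `μ ∈ 𝒫₂(ℝᵈ)`: Borel probability measure with finite second moment. -/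
def MemP2 {d : ℕ} (μ : Measure (EucSp d)) : Prop :=
  IsProbabilityMeasure μ ∧ Integrable (fun x => ‖x‖ ^ 2) μ

/-- `μ ∈ 𝒫_{2,ac}(ℝᵈ)`: additionally absolutely continuous w.r.t. Lebesgue measure. -/
def MemP2ac {d : ℕ} (μ : Measure (EucSp d)) : Prop :=
  MemP2 μ ∧ μ ≪ (volume : Measure (EucSp d))

/-- Mean vector of a measure. -/
def meanOf {d : ℕ} (μ : Measure (EucSp d)) : EucSp d := ∫ x, x ∂μ

/-- `Var(μ)`: trace of the covariance matrix of `μ`. -/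
def varOf {d : ℕ} (μ : Measure (EucSp d)) : ℝ := ∫ x, ‖x - meanOf μ‖ ^ 2 ∂μ

/-- Kullback–Leibler divergence `KL(μ‖π) = ∫ log (dμ/dπ) dμ`. -/
def KLdiv {d : ℕ} (μ π : Measure (EucSp d)) : ℝ :=
  ∫ x, Real.log ((μ.rnDeriv π x).toReal) ∂μ

/-- Fisher divergence `FD(μ‖π) = ∫ ‖∇ log (dμ/dπ)‖² dμ`. -/
def FDiv {d : ℕ} (μ π : Measure (EucSp d)) : ℝ :=
  ∫ x, ‖gradient (fun y => Real.log ((μ.rnDeriv π y).toReal)) x‖ ^ 2 ∂μ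

/-- `π` satisfies a logarithmic Sobolev inequality with constant `C`. -/
def SatisfiesLSI {d : ℕ} (π : Measure (EucSp d)) (C : ℝ) : Prop :=
  ∀ μ : Measure (EucSp d), MemP2ac μ → μ ≪ π → KLdiv μ π ≤ C / 2 * FDiv μ π

/-- The Gaussian measure `N(0, v·I_d)` on `ℝᵈ`. -/
def stdGaussianE (d : ℕ) (v : ℝ) : Measure (EucSp d) :=
  (Measure.pi fun _ : Fin d => gaussianReal 0 v.toNNReal).map
    (MeasurableEquiv.toLp 2 (Fin d → ℝ))

/-- Gradient of the log-density (w.r.t. Lebesgue measure) of a measure. -/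
def gradLogDens {d : ℕ} (μ : Measure (EucSp d)) (x : EucSp d) : EucSp d :=
  gradient (fun y => Real.log ((μ.rnDeriv (volume : Measure (EucSp d)) y).toReal)) x

/-- The Wasserstein gradient `∇_W 𝓔̄(x, μ) = V̄(x,μ) + (σ²/2) ∇ log μ(x)` of the functional
`𝓔̄ = 𝓕̄ + (σ²/2)𝓗`, where `V̄ = ∇_W 𝓕̄`. -/
def WGradE {d : ℕ} (Vbar : EucSp d → Measure (EucSp d) → EucSp d) (σ : ℝ)
    (x : EucSp d) (μ : Measure (EucSp d)) : EucSp d :=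
  Vbar x μ + (σ ^ 2 / 2) • gradLogDens μ x

/-- `B` is a standard `ℝᵈ`-valued Brownian motion on `(Ω, P)`. -/
def IsStdBrownian {Ω : Type*} [MeasurableSpace Ω] {d : ℕ} (B : ℝ → Ω → EucSp d)
    (P : Measure Ω) : Prop :=
  (∀ᵐ ω ∂P, B 0 ω = 0) ∧
  (∀ᵐ ω ∂P, Continuous fun t => B t ω) ∧
  (∀ s t : ℝ, 0 ≤ s → s ≤ t →
    P.map (fun ω => B t ω - B s ω) = stdGaussianE d (t - s)) ∧
  (∀ s t : ℝ, 0 ≤ s → s ≤ t →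
    IndepFun (fun ω => B t ω - B s ω) (fun ω (r : Set.Icc (0:ℝ) s) => B (r : ℝ) ω) P)

/-- Index type enumerating all the independent random draws of Algorithm 1. -/
inductive AlgIdx : Type where
  | x0 : ℕ → AlgIdx
  | y0 : ℕ → AlgIdx
  | xi : ℕ → AlgIdx
  | z : ℕ → ℕ → AlgIdx
  | w : ℕ → ℕ → AlgIdx

/-- Value space of each random draw of Algorithm 1. -/
def algType (d m : ℕ) : AlgIdx → Type
  | .x0 _ => EucSp d
  | .y0 _ => EucSp d
  | .xi _ => EucSp m
  | .z _ _ => EucSp d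
  | .w _ _ => EucSp d

/-- Measurable structure on the value spaces. -/
def algMS (d m : ℕ) : ∀ i : AlgIdx, MeasurableSpace (algType d m i)
  | .x0 _ => inferInstanceAs (MeasurableSpace (EucSp d))
  | .y0 _ => inferInstanceAs (MeasurableSpace (EucSp d))
  | .xi _ => inferInstanceAs (MeasurableSpace (EucSp m))
  | .z _ _ => inferInstanceAs (MeasurableSpace (EucSp d))
  | .w _ _ => inferInstanceAs (MeasurableSpace (EucSp d))

/-- The family of all random draws of Algorithm 1, as a single indexed family. -/
def algFam {Ω : Type*} {d m : ℕ} (X0 Y0 : ℕ → Ω → EucSp d) (Ξ : ℕ → Ω → EucSp m)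
    (Z W : ℕ → ℕ → Ω → EucSp d) : ∀ i : AlgIdx, Ω → algType d m i
  | .x0 i => X0 i
  | .y0 j => Y0 j
  | .xi k => Ξ k
  | .z k i => Z k i
  | .w k j => W k j

/-- The virtual particles `Y_k^{(j)}` of Algorithm 1:
`Y_{k+1}^{(j)} = Y_k^{(j)} + η Ĝ(Y_k^{(j)}, Y_k^{(k)}, ξ_k) + σ√η W_k^{(j)}`. -/
def Yalg {Ω : Type*} {d m : ℕ} (η σ : ℝ) (G : EucSp d → EucSp d → EucSp m → EucSp d)
    (Y0 : ℕ → Ω → EucSp d) (Ξ : ℕ → Ω → EucSp m) (W : ℕ → ℕ → Ω → EucSp d) :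
    ℕ → ℕ → Ω → EucSp d
  | 0, j => Y0 j
  | (k+1), j => fun ω =>
      Yalg η σ G Y0 Ξ W k j ω
        + η • G (Yalg η σ G Y0 Ξ W k j ω) (Yalg η σ G Y0 Ξ W k k ω) (Ξ k ω)
        + (σ * Real.sqrt η) • W k j ω

/-- The real particles `X_k^{(i)}` of Algorithm 1:
`X_{k+1}^{(i)} = X_k^{(i)} + η Ĝ(X_k^{(i)}, Y_k^{(k)}, ξ_k) + σ√η Z_k^{(i)}`. -/
def Xalg {Ω : Type*} {d m : ℕ} (η σ : ℝ) (G : EucSp d → EucSp d → EucSp m → EucSp d)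
    (X0 Y0 : ℕ → Ω → EucSp d) (Ξ : ℕ → Ω → EucSp m) (Z W : ℕ → ℕ → Ω → EucSp d) :
    ℕ → ℕ → Ω → EucSp d
  | 0, i => X0 i
  | (k+1), i => fun ω =>
      Xalg η σ G X0 Y0 Ξ Z W k i ω
        + η • G (Xalg η σ G X0 Y0 Ξ Z W k i ω) (Yalg η σ G Y0 Ξ W k k ω) (Ξ k ω)
        + (σ * Real.sqrt η) • Z k i ω

/-- The random variables `(Y_0^{(0)},…,Y_{k-1}^{(k-1)}, ξ_0,…,ξ_{k-1})` generating the σ-algebra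
`R_{k-1}`; conditioning on `R_{k-1}` is conditioning on this map. -/
def Rvar {Ω : Type*} {d m : ℕ} (η σ : ℝ) (G : EucSp d → EucSp d → EucSp m → EucSp d)
    (Y0 : ℕ → Ω → EucSp d) (Ξ : ℕ → Ω → EucSp m) (W : ℕ → ℕ → Ω → EucSp d) (k : ℕ) :
    Ω → (Fin k → EucSp d) × (Fin k → EucSp m) :=
  fun ω => (fun j => Yalg η σ G Y0 Ξ W j j ω, fun j => Ξ j ω)

namespace ProbabilityTheory

open Function

variable {Ω ι κ α β δ : Type*} {mΩ : MeasurableSpace Ω} {P : Measure Ω}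
  [MeasurableSpace α] [MeasurableSpace β] [MeasurableSpace δ]

theorem iIndep.iIndep_biSup {m : ι → MeasurableSpace Ω} (h_le : ∀ i, m i ≤ mΩ)
    (h : iIndep m P) {J : κ → Set ι} (hJ : Pairwise (Disjoint on J)) :
    iIndep (fun b => ⨆ i ∈ J b, m i) P := by
  classical
  refine iIndepSets.iIndep (fun b => iSup₂_le fun i _ => h_le i)
    (fun b => piiUnionInter (fun i => {s | MeasurableSet[m i] s}) (J b))
    (fun b => isPiSystem_piiUnionInter _
      (fun i => @MeasurableSpace.isPiSystem_measurableSet Ω (m i)) _)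
    (fun b => (generateFrom_piiUnionInter_measurableSet m (J b)).symm) ?_
  rw [iIndepSets_iff]
  intro s E hE
  choose! t htJ g hg hE using hE
  have ht : (s : Set κ).PairwiseDisjoint t := fun b hb b' hb' hbb' =>
    Finset.disjoint_coe.mp ((hJ hbb').mono (htJ b hb) (htJ b' hb'))
  -- the blocks being disjoint, each index `i` carries the set of at most one block
  let g' : ι → Set Ω := fun i => ⋂ b ∈ s.filter (i ∈ t ·), g b i
  have hg' : ∀ b ∈ s, ∀ i ∈ t b, g' i = g b i := fun b hb i hi => by
    have : s.filter (i ∈ t ·) = {b} := Finset.eq_singleton_iff_unique_mem.mpr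
      ⟨Finset.mem_filter.mpr ⟨hb, hi⟩, fun b' hb' => by
        by_contra hne
        exact Finset.disjoint_left.mp (ht (Finset.mem_filter.mp hb').1 hb hne)
          (Finset.mem_filter.mp hb').2 hi⟩
    simp only [g', this, Finset.set_biInter_singleton]
  have hE' : ∀ b ∈ s, E b = ⋂ i ∈ t b, g' i := fun b hb => by
    rw [hE b hb]
    exact Set.iInter₂_congr fun i hi => (hg' b hb i hi).symm
  have hm' : ∀ i ∈ s.biUnion t, MeasurableSet[m i] (g' i) := fun i hi => by
    obtain ⟨b, hb, hi⟩ := Finset.mem_biUnion.mp hi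
    exact hg' b hb i hi ▸ hg b hb i hi
  calc P (⋂ b ∈ s, E b) = P (⋂ i ∈ s.biUnion t, g' i) := by
        rw [Finset.set_biInter_biUnion]
        exact congrArg P (Set.iInter₂_congr hE')
    _ = ∏ b ∈ s, ∏ i ∈ t b, P (g' i) := by rw [h.meas_biInter hm', Finset.prod_biUnion ht]
    _ = ∏ b ∈ s, P (E b) := Finset.prod_congr rfl fun b hb => by
        rw [hE' b hb, h.meas_biInter fun i hi => hm' i (Finset.mem_biUnion.mpr ⟨b, hb, hi⟩)]

theorem Indep.indepFun_of_measurable {m₁ m₂ : MeasurableSpace Ω} (h : Indep m₁ m₂ P)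
    {f : Ω → α} {g : Ω → β} (hf : Measurable[m₁] f) (hg : Measurable[m₂] g) : IndepFun f g P :=
  (IndepFun_iff_Indep f g P).2 (indep_of_indep_of_le h hf.comap_le hg.comap_le)

theorem iIndep.map_prodMk_pi_eq_prod [IsProbabilityMeasure P] [Fintype κ]
    {m : ι → MeasurableSpace Ω} (h_le : ∀ i, m i ≤ mΩ) (h : iIndep m P)
    {i₀ : ι} {e : κ → ι} (he : Injective e) (hi₀ : ∀ l, e l ≠ i₀)
    {x : Ω → α} {z : κ → Ω → β} (hx : Measurable[m i₀] x) (hz : ∀ l, Measurable[m (e l)] (z l)) :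
    P.map (fun ω => (x ω, fun l => z l ω)) = (P.map x).prod (Measure.pi fun l => P.map (z l)) := by
  have hz' : Measurable[⨆ i ∈ Set.range e, m i] fun ω l => z l ω :=
    @measurable_pi_lambda Ω κ (fun _ => β) (⨆ i ∈ Set.range e, m i) _ _
      fun l => (hz l).mono (le_biSup m (Set.mem_range_self l)) le_rfl
  have hxz : IndepFun x (fun ω l => z l ω) P := by
    refine Indep.indepFun_of_measurable (indep_iSup_of_disjoint h_le h
      (S := {i₀}) (T := Set.range e) ?_) (by rwa [iSup_singleton]) hz'
    simpa [Set.disjoint_singleton_left] using hi₀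
  have hiid : iIndepFun z P :=
    iIndep_of_iIndep_of_le (h.precomp he) fun l => (hz l).comap_le
  have hxm : Measurable x := hx.mono (h_le i₀) le_rfl
  have hzm : Measurable fun ω l => z l ω := hz'.mono (iSup₂_le fun i _ => h_le i) le_rfl
  rw [(indepFun_iff_map_prod_eq_prod_map_map hxm.aemeasurable hzm.aemeasurable).mp hxz,
    hiid.map_fun_eq_pi_map fun l => (measurable_pi_iff.mp hzm l).aemeasurable]

theorem condDistrib_ae_eq_map_of_indepFun [IsFiniteMeasure P] [StandardBorelSpace δ]
    [Nonempty δ] {R : Ω → β} {S : Ω → α} {F : β → α → δ} (hR : Measurable R) (hS : Measurable S)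
    (hF : Measurable (uncurry F)) (hRS : IndepFun R S P) :
    ∀ᵐ ω ∂P, condDistrib (fun ω => F (R ω) (S ω)) R P (R ω) = (P.map S).map (F (R ω)) := by
  have hFb : ∀ b, Measurable (F b) := fun b => hF.comp measurable_prodMk_left
  let κ : Kernel β δ := (Kernel.id ×ₖ Kernel.const β (P.map S)).map (uncurry F)
  have hκ : ∀ b, κ b = (P.map S).map (F b) := fun b => by
    rw [Kernel.map_apply _ hF, Kernel.prod_apply, Kernel.id_apply, Kernel.const_apply,
      Measure.dirac_prod, Measure.map_map hF measurable_prodMk_left]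
    rfl
  have hjoint : P.map (fun ω => (R ω, F (R ω) (S ω))) = P.map R ⊗ₘ κ := by
    have hpair : Measurable fun p : β × α => (p.1, F p.1 p.2) := measurable_fst.prodMk hF
    have hcomp : P.map (fun ω => (R ω, F (R ω) (S ω)))
        = (P.map fun ω => (R ω, S ω)).map fun p => (p.1, F p.1 p.2) := by
      rw [Measure.map_map hpair (hR.prodMk hS)]
      rfl
    ext s hs
    rw [Measure.compProd_apply hs, hcomp, Measure.map_apply hpair hs,
      (indepFun_iff_map_prod_eq_prod_map_map hR.aemeasurable hS.aemeasurable).mp hRS,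
      Measure.prod_apply (hpair hs)]
    refine lintegral_congr fun b => ?_
    rw [hκ, Measure.map_apply (hFb b) (measurable_prodMk_left hs)]
    rfl
  filter_upwards [ae_of_ae_map hR.aemeasurable
    (condDistrib_ae_eq_of_measure_eq_compProd_of_measurable hR (hF.comp (hR.prodMk hS)) hjoint)]
    with ω hω
  exact hω.trans (hκ _)

theorem condDistrib_pi_ae_eq_pi_of_indepFun [IsProbabilityMeasure P] [Fintype ι]
    [StandardBorelSpace δ] [Nonempty δ] {R : Ω → β} {S : ι → Ω → α} {S₀ : Ω → α}
    {F : β → α → δ} (hR : Measurable R) (hS : ∀ a, Measurable (S a)) (hS₀ : Measurable S₀)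
    (hF : Measurable (uncurry F)) (hRS : IndepFun R (fun ω a => S a ω) P)
    (hRS₀ : IndepFun R S₀ P) (hiid : iIndepFun S P) (hlaw : ∀ a, P.map (S a) = P.map S₀) :
    ∀ᵐ ω ∂P, condDistrib (fun ω a => F (R ω) (S a ω)) R P (R ω)
      = Measure.pi fun _ => condDistrib (fun ω => F (R ω) (S₀ ω)) R P (R ω) := by
  have hFb : ∀ b, Measurable (F b) := fun b => hF.comp measurable_prodMk_left
  have hFvec : Measurable (uncurry fun b (s : ι → α) a => F b (s a)) :=
    measurable_pi_lambda _ fun a =>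
      hF.comp (measurable_fst.prodMk ((measurable_pi_apply a).comp measurable_snd))
  filter_upwards [condDistrib_ae_eq_map_of_indepFun hR (measurable_pi_lambda _ hS) hFvec hRS,
    condDistrib_ae_eq_map_of_indepFun hR hS₀ hF hRS₀] with ω hvec h₀
  rw [hvec, h₀, hiid.map_fun_eq_pi_map fun a => (hS a).aemeasurable, funext hlaw,
    Measure.pi_map_pi fun _ => (hFb _).aemeasurable]

end ProbabilityTheory

section ParticleMap

variable {d m : ℕ} (η σ : ℝ) (G : EucSp d → EucSp d → EucSp m → EucSp d)

/-- Position after `k` steps of a particle started at `s.1` with Gaussian increments `s.2`, when the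
reference points `Y_l^{(l)}` and the draws `ξ_l` are `r.1 l` and `r.2 l`. -/
def particleMap : (k : ℕ) → (Fin k → EucSp d) × (Fin k → EucSp m) → EucSp d × (Fin k → EucSp d) →
    EucSp d
  | 0, _, s => s.1
  | k + 1, r, s =>
    let x := particleMap k (Fin.init r.1, Fin.init r.2) (s.1, Fin.init s.2)
    x + η • G x (r.1 (Fin.last k)) (r.2 (Fin.last k)) + (σ * Real.sqrt η) • s.2 (Fin.last k)

theorem measurable_particleMap
    (hG : Measurable fun p : EucSp d × EucSp d × EucSp m => G p.1 p.2.1 p.2.2) (k : ℕ) :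
    Measurable (Function.uncurry (particleMap η σ G k)) := by
  induction k with
  | zero => exact measurable_snd.fst
  | succ k ih =>
    have hinit : ∀ (γ : Type) [MeasurableSpace γ],
        Measurable (Fin.init : (Fin (k + 1) → γ) → Fin k → γ) :=
      fun _ _ => measurable_pi_lambda _ fun _ => measurable_pi_apply _
    have hx : Measurable fun q : ((Fin (k + 1) → EucSp d) × (Fin (k + 1) → EucSp m)) ×
        (EucSp d × (Fin (k + 1) → EucSp d)) =>
        particleMap η σ G k (Fin.init q.1.1, Fin.init q.1.2) (q.2.1, Fin.init q.2.2) :=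
      ih.comp ((((hinit _).comp measurable_fst.fst).prodMk
        ((hinit _).comp measurable_fst.snd)).prodMk
        (measurable_snd.fst.prodMk ((hinit _).comp measurable_snd.snd)))
    have hlast : ∀ (γ : Type) [MeasurableSpace γ],
        Measurable fun v : Fin (k + 1) → γ => v (Fin.last k) := fun _ _ => measurable_pi_apply _
    exact (hx.add ((hG.comp (hx.prodMk (((hlast _).comp measurable_fst.fst).prodMk
      ((hlast _).comp measurable_fst.snd)))).const_smul η)).add
      (((hlast (EucSp d)).comp measurable_snd.snd).const_smul (σ * Real.sqrt η))

variable {Ω : Type*} (X0 Y0 : ℕ → Ω → EucSp d) (Ξ : ℕ → Ω → EucSp m) (Z W : ℕ → ℕ → Ω → EucSp d)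

theorem Xalg_eq_particleMap (k i : ℕ) (ω : Ω) :
    Xalg η σ G X0 Y0 Ξ Z W k i ω
      = particleMap η σ G k (Rvar η σ G Y0 Ξ W k ω) (X0 i ω, fun l => Z l i ω) := by
  induction k with
  | zero => rfl
  | succ k ih => simp only [Xalg, ih]; rfl

theorem Yalg_eq_particleMap {k j : ℕ} (hkj : k ≤ j) (ω : Ω) :
    Yalg η σ G Y0 Ξ W k j ω
      = particleMap η σ G k (Rvar η σ G Y0 Ξ W k ω) (Y0 j ω, fun l => W l j ω) := by
  induction k with
  | zero => rfl
  | succ k ih => simp only [Yalg, ih (by omega : k ≤ j)]; rfl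

end ParticleMap

/-- The particle to whose private randomness at step `k` a draw belongs: `inl i` for `X^{(i)}`,
`inr j` for `Y^{(j)}` with `k ≤ j`, and `none` for the remaining draws, which include all those
that `R_{k-1}` depends on. -/
def AlgIdx.owner (k : ℕ) : AlgIdx → Option (ℕ ⊕ ℕ)
  | .x0 i | .z _ i => some (.inl i)
  | .y0 j | .w _ j => if k ≤ j then some (.inr j) else none
  | .xi _ => none

section Algorithm1

variable {Ω : Type*} {mΩ : MeasurableSpace Ω} {P : Measure Ω} {d m : ℕ} {η σ : ℝ}
  {G : EucSp d → EucSp d → EucSp m → EucSp d}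
  {X0 Y0 : ℕ → Ω → EucSp d} {Ξ : ℕ → Ω → EucSp m} {Z W : ℕ → ℕ → Ω → EucSp d}

theorem measurable_Yalg_of_lt
    (hG : Measurable fun p : EucSp d × EucSp d × EucSp m => G p.1 p.2.1 p.2.2)
    (m₀ : MeasurableSpace Ω) {k : ℕ} (hY0 : ∀ j < k, Measurable[m₀] (Y0 j))
    (hΞ : ∀ l < k, Measurable[m₀] (Ξ l)) (hW : ∀ l j, l < j → j < k → Measurable[m₀] (W l j)) :
    ∀ l j, l ≤ j → j < k → Measurable[m₀] (Yalg η σ G Y0 Ξ W l j) := by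
  intro l
  induction l with
  | zero => exact fun j _ hj => hY0 j hj
  | succ l ih =>
    intro j hlj hj
    have hlj' := ih j (by omega) hj
    have hll := ih l le_rfl (by omega)
    exact (hlj'.add ((hG.comp (hlj'.prodMk (hll.prodMk (hΞ l (by omega))))).const_smul η)).add
      ((hW l j (by omega) hj).const_smul (σ * Real.sqrt η))

theorem measurable_Rvar
    (hG : Measurable fun p : EucSp d × EucSp d × EucSp m => G p.1 p.2.1 p.2.2)
    (m₀ : MeasurableSpace Ω) {k : ℕ} (hY0 : ∀ j < k, Measurable[m₀] (Y0 j))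
    (hΞ : ∀ l < k, Measurable[m₀] (Ξ l)) (hW : ∀ l j, l < j → j < k → Measurable[m₀] (W l j)) :
    Measurable[m₀] (Rvar η σ G Y0 Ξ W k) :=
  have hYdiag := measurable_Yalg_of_lt hG m₀ hY0 hΞ hW
  (measurable_pi_lambda _ fun j : Fin k => hYdiag j j le_rfl j.2).prodMk
    (measurable_pi_lambda _ fun j : Fin k => hΞ j j.2)

/-- Initial point and first `k` Gaussian increments of `X^{(i)}` (for `inl i`) or `Y^{(j)}`
(for `inr j`). -/
def seed (X0 Y0 : ℕ → Ω → EucSp d) (Z W : ℕ → ℕ → Ω → EucSp d) (k : ℕ) :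
    ℕ ⊕ ℕ → Ω → EucSp d × (Fin k → EucSp d)
  | .inl i => fun ω => (X0 i ω, fun l => Z l i ω)
  | .inr j => fun ω => (Y0 j ω, fun l => W l j ω)

theorem sumElim_Xalg_Yalg_eq_particleMap {k : ℕ} {p : ℕ ⊕ ℕ} (hp : ∀ j, p = .inr j → k ≤ j)
    (ω : Ω) :
    Sum.elim (Xalg η σ G X0 Y0 Ξ Z W k · ω) (Yalg η σ G Y0 Ξ W k · ω) p
      = particleMap η σ G k (Rvar η σ G Y0 Ξ W k ω) (seed X0 Y0 Z W k p ω) := by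
  rcases p with i | j
  · exact Xalg_eq_particleMap η σ G X0 Y0 Ξ Z W k i ω
  · exact Yalg_eq_particleMap η σ G Y0 Ξ W (hp j rfl) ω

abbrev drawsSigma (X0 Y0 : ℕ → Ω → EucSp d) (Ξ : ℕ → Ω → EucSp m) (Z W : ℕ → ℕ → Ω → EucSp d)
    (S : Set AlgIdx) : MeasurableSpace Ω :=
  ⨆ a ∈ S, (algMS d m a).comap (algFam X0 Y0 Ξ Z W a)

theorem measurable_algFam_drawsSigma {S : Set AlgIdx} {a : AlgIdx} (ha : a ∈ S) :
    Measurable[drawsSigma X0 Y0 Ξ Z W S, algMS d m a] (algFam X0 Y0 Ξ Z W a) :=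
  (comap_measurable _).mono
    (le_biSup (fun a => (algMS d m a).comap (algFam X0 Y0 Ξ Z W a)) ha) le_rfl

theorem measurable_Rvar_drawsSigma_owner_none
    (hG : Measurable fun p : EucSp d × EucSp d × EucSp m => G p.1 p.2.1 p.2.2) (k : ℕ) :
    Measurable[drawsSigma X0 Y0 Ξ Z W (AlgIdx.owner k ⁻¹' {none})] (Rvar η σ G Y0 Ξ W k) := by
  refine measurable_Rvar hG _ (fun j hj => ?_) (fun l _ => ?_) (fun l j _ hj => ?_)
  · exact measurable_algFam_drawsSigma (a := .y0 j) (by simp [AlgIdx.owner, hj])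
  · exact measurable_algFam_drawsSigma (a := .xi l) rfl
  · exact measurable_algFam_drawsSigma (a := .w l j) (by simp [AlgIdx.owner, hj])

theorem measurable_seed_drawsSigma_owner {k : ℕ} {p : ℕ ⊕ ℕ} (hp : ∀ j, p = .inr j → k ≤ j) :
    Measurable[drawsSigma X0 Y0 Ξ Z W (AlgIdx.owner k ⁻¹' {some p})] (seed X0 Y0 Z W k p) := by
  let _ : MeasurableSpace Ω := drawsSigma X0 Y0 Ξ Z W (AlgIdx.owner k ⁻¹' {some p})
  rcases p with i | j
  · have hX0 : Measurable (X0 i) := measurable_algFam_drawsSigma (a := .x0 i) rfl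
    have hZ : ∀ l : Fin k, Measurable (Z l i) := fun l =>
      measurable_algFam_drawsSigma (a := .z l i) rfl
    exact hX0.prodMk (measurable_pi_lambda _ hZ)
  · have hj := hp j rfl
    have hY0 : Measurable (Y0 j) :=
      measurable_algFam_drawsSigma (a := .y0 j) (by simp [AlgIdx.owner, hj])
    have hW : ∀ l : Fin k, Measurable (W l j) := fun l =>
      measurable_algFam_drawsSigma (a := .w l j) (by simp [AlgIdx.owner, hj])
    exact hY0.prodMk (measurable_pi_lambda _ hW)

theorem measurable_algFam (hmX0 : ∀ i, Measurable (X0 i)) (hmY0 : ∀ j, Measurable (Y0 j))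
    (hmΞ : ∀ k, Measurable (Ξ k)) (hmZ : ∀ k i, Measurable (Z k i))
    (hmW : ∀ k j, Measurable (W k j)) :
    ∀ a, Measurable[mΩ, algMS d m a] (algFam X0 Y0 Ξ Z W a)
  | .x0 i => hmX0 i
  | .y0 j => hmY0 j
  | .xi l => hmΞ l
  | .z l i => hmZ l i
  | .w l j => hmW l j

theorem map_seed [IsProbabilityMeasure P] {μ₀ : Measure (EucSp d)}
    (hmeas : ∀ a, Measurable[mΩ, algMS d m a] (algFam X0 Y0 Ξ Z W a))
    (hlX0 : ∀ i, P.map (X0 i) = μ₀) (hlY0 : ∀ j, P.map (Y0 j) = μ₀)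
    (hlZ : ∀ k i, P.map (Z k i) = stdGaussianE d 1)
    (hlW : ∀ k j, P.map (W k j) = stdGaussianE d 1)
    (hindep : iIndepFun (m := algMS d m) (algFam X0 Y0 Ξ Z W) P) (k : ℕ) (p : ℕ ⊕ ℕ) :
    P.map (seed X0 Y0 Z W k p) = μ₀.prod (Measure.pi fun _ : Fin k => stdGaussianE d 1) := by
  have h_le a := (hmeas a).comap_le
  rcases p with i | j
  · have h := hindep.iIndep.map_prodMk_pi_eq_prod (α := EucSp d) (β := EucSp d) h_le
      (i₀ := .x0 i) (e := fun l : Fin k => .z l i) (fun l l' h => Fin.ext (AlgIdx.z.inj h).1)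
      (fun _ => nofun)
      (x := X0 i) (comap_measurable _) (z := fun l => Z l i) fun _ => comap_measurable _
    simp only [hlX0, hlZ] at h
    exact h
  · have h := hindep.iIndep.map_prodMk_pi_eq_prod (α := EucSp d) (β := EucSp d) h_le
      (i₀ := .y0 j) (e := fun l : Fin k => .w l j) (fun l l' h => Fin.ext (AlgIdx.w.inj h).1)
      (fun _ => nofun)
      (x := Y0 j) (comap_measurable _) (z := fun l => W l j) fun _ => comap_measurable _
    simp only [hlY0, hlW] at h
    exact h

theorem condDistrib_particles_ae_eq_pi [IsProbabilityMeasure P] {μ₀ : Measure (EucSp d)}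
    (hGmeas : Measurable fun p : EucSp d × EucSp d × EucSp m => G p.1 p.2.1 p.2.2)
    (hmeas : ∀ a, Measurable[mΩ, algMS d m a] (algFam X0 Y0 Ξ Z W a))
    (hlX0 : ∀ i, P.map (X0 i) = μ₀) (hlY0 : ∀ j, P.map (Y0 j) = μ₀)
    (hlZ : ∀ k i, P.map (Z k i) = stdGaussianE d 1)
    (hlW : ∀ k j, P.map (W k j) = stdGaussianE d 1)
    (hindep : iIndepFun (m := algMS d m) (algFam X0 Y0 Ξ Z W) P)
    (k : ℕ) {ι : Type*} [Fintype ι] {sel : ι → ℕ ⊕ ℕ} (hsel : Function.Injective sel)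
    (hk : ∀ a j, sel a = .inr j → k ≤ j) :
    ∀ᵐ ω ∂P,
      condDistrib (fun ω a => Sum.elim (Xalg η σ G X0 Y0 Ξ Z W k · ω) (Yalg η σ G Y0 Ξ W k · ω)
          (sel a)) (Rvar η σ G Y0 Ξ W k) P (Rvar η σ G Y0 Ξ W k ω)
        = Measure.pi fun _ : ι => condDistrib (Xalg η σ G X0 Y0 Ξ Z W k 0)
            (Rvar η σ G Y0 Ξ W k) P (Rvar η σ G Y0 Ξ W k ω) := by
  have h_le a := (hmeas a).comap_le
  have hblock_le (S : Set AlgIdx) : drawsSigma X0 Y0 Ξ Z W S ≤ mΩ := iSup₂_le fun a _ => h_le a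
  have hblocks : iIndep (fun b => drawsSigma X0 Y0 Ξ Z W (AlgIdx.owner k ⁻¹' {b})) P :=
    hindep.iIndep.iIndep_biSup h_le (pairwise_disjoint_fiber _)
  have hR : Measurable[drawsSigma X0 Y0 Ξ Z W (AlgIdx.owner k ⁻¹' {none})]
      (Rvar η σ G Y0 Ξ W k) := measurable_Rvar_drawsSigma_owner_none hGmeas k
  have hseed : ∀ a, Measurable[drawsSigma X0 Y0 Ξ Z W (AlgIdx.owner k ⁻¹' {some (sel a)})]
      (seed X0 Y0 Z W k (sel a)) := fun a => measurable_seed_drawsSigma_owner (hk a)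
  have hseed₀ : Measurable[drawsSigma X0 Y0 Ξ Z W (AlgIdx.owner k ⁻¹' {some (.inl 0)})]
      (seed X0 Y0 Z W k (.inl 0)) := measurable_seed_drawsSigma_owner nofun
  have hRS : IndepFun (Rvar η σ G Y0 Ξ W k) (fun ω a => seed X0 Y0 Z W k (sel a) ω) P := by
    refine Indep.indepFun_of_measurable (indep_iSup_of_disjoint (fun b => hblock_le _) hblocks
      (S := {none}) (T := Set.range (some ∘ sel)) (by simp [Set.disjoint_singleton_left]))
      (by rwa [iSup_singleton]) ?_
    let _ := ⨆ b ∈ Set.range (some ∘ sel), drawsSigma X0 Y0 Ξ Z W (AlgIdx.owner k ⁻¹' {b})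
    exact measurable_pi_lambda _ fun a => (hseed a).mono
      (le_biSup (fun b => drawsSigma X0 Y0 Ξ Z W (AlgIdx.owner k ⁻¹' {b})) ⟨a, rfl⟩) le_rfl
  have hRS₀ : IndepFun (Rvar η σ G Y0 Ξ W k) (seed X0 Y0 Z W k (.inl 0)) P :=
    (hblocks.indep (Option.some_ne_none _).symm).indepFun_of_measurable hR hseed₀
  have hiid : iIndepFun (fun a => seed X0 Y0 Z W k (sel a)) P :=
    iIndep_of_iIndep_of_le (hblocks.precomp ((Option.some_injective _).comp hsel))
      fun a => (hseed a).comap_le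
  have hlaw a : P.map (seed X0 Y0 Z W k (sel a)) = P.map (seed X0 Y0 Z W k (.inl 0)) := by
    simp only [map_seed hmeas hlX0 hlY0 hlZ hlW hindep]
  have hfun : (fun ω a => Sum.elim (Xalg η σ G X0 Y0 Ξ Z W k · ω) (Yalg η σ G Y0 Ξ W k · ω)
      (sel a))
      = fun ω a => particleMap η σ G k (Rvar η σ G Y0 Ξ W k ω) (seed X0 Y0 Z W k (sel a) ω) :=
    funext₂ fun ω a => sumElim_Xalg_Yalg_eq_particleMap (hk a) ω
  have hfun₀ : Xalg η σ G X0 Y0 Ξ Z W k 0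
      = fun ω => particleMap η σ G k (Rvar η σ G Y0 Ξ W k ω) (seed X0 Y0 Z W k (.inl 0) ω) :=
    funext fun ω => Xalg_eq_particleMap η σ G X0 Y0 Ξ Z W k 0 ω
  rw [hfun, hfun₀]
  exact condDistrib_pi_ae_eq_pi_of_indepFun (hR.mono (hblock_le _) le_rfl)
    (fun a => (hseed a).mono (hblock_le _) le_rfl) (hseed₀.mono (hblock_le _) le_rfl)
    (measurable_particleMap η σ G hGmeas k) hRS hRS₀ hiid hlaw

end Algorithm1

theorem statement0_general
    {Ω : Type*} [MeasurableSpace Ω] (P : Measure Ω) [IsProbabilityMeasure P]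
    (d m n T : ℕ) (η σ : ℝ)
    (μ₀ : Measure (EucSp d))
    (G : EucSp d → EucSp d → EucSp m → EucSp d)
    (hGmeas : Measurable fun p : EucSp d × EucSp d × EucSp m => G p.1 p.2.1 p.2.2)
    (X0 Y0 : ℕ → Ω → EucSp d) (Ξ : ℕ → Ω → EucSp m) (Z W : ℕ → ℕ → Ω → EucSp d)
    (hmX0 : ∀ i, Measurable (X0 i)) (hmY0 : ∀ j, Measurable (Y0 j))
    (hmΞ : ∀ k, Measurable (Ξ k)) (hmZ : ∀ k i, Measurable (Z k i))
    (hmW : ∀ k j, Measurable (W k j))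
    (hlX0 : ∀ i, P.map (X0 i) = μ₀) (hlY0 : ∀ j, P.map (Y0 j) = μ₀)
    (hlZ : ∀ k i, P.map (Z k i) = stdGaussianE d 1)
    (hlW : ∀ k j, P.map (W k j) = stdGaussianE d 1)
    (hindep : iIndepFun (m := algMS d m) (algFam X0 Y0 Ξ Z W) P) :
    (∀ k ≤ T,
      ∀ᵐ ω ∂P,
        condDistrib
          (fun ω => Sum.elim (fun i : Fin n => Xalg η σ G X0 Y0 Ξ Z W k i ω)
            (fun j : Fin (T + 1 - k) => Yalg η σ G Y0 Ξ W k (k + (j : ℕ)) ω))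
          (Rvar η σ G Y0 Ξ W k) P (Rvar η σ G Y0 Ξ W k ω)
          = Measure.pi (fun _ : Fin n ⊕ Fin (T + 1 - k) =>
              condDistrib (Xalg η σ G X0 Y0 Ξ Z W k 0) (Rvar η σ G Y0 Ξ W k) P
                (Rvar η σ G Y0 Ξ W k ω)))
    ∧
    (∀ᵐ ω ∂P,
      condDistrib (fun ω => fun i : Fin n => Xalg η σ G X0 Y0 Ξ Z W T i ω)
        (Rvar η σ G Y0 Ξ W T) P (Rvar η σ G Y0 Ξ W T ω)
        = Measure.pi (fun _ : Fin n =>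
            condDistrib (Xalg η σ G X0 Y0 Ξ Z W T 0) (Rvar η σ G Y0 Ξ W T) P
              (Rvar η σ G Y0 Ξ W T ω))) := by
  have hparticles := condDistrib_particles_ae_eq_pi (η := η) (σ := σ) hGmeas
    (measurable_algFam hmX0 hmY0 hmΞ hmZ hmW) hlX0 hlY0 hlZ hlW hindep
  refine ⟨fun k _ => ?_, hparticles T (Sum.inl_injective.comp Fin.val_injective) nofun⟩
  have hsel : Function.Injective
      (Sum.map (Fin.val : Fin n → ℕ) fun j : Fin (T + 1 - k) => k + j) :=
    Fin.val_injective.sumMap ((add_right_injective k).comp Fin.val_injective)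
  convert hparticles k hsel (by rintro (_ | j) _ ⟨⟩; exact Nat.le_add_right k j) using 5
  funext ω a
  cases a <;> rfl

/-- In Algorithm 1 (virtual particle stochastic approximation), for every
`0 ≤ k ≤ T`, conditioned on `R_{k-1}`, the random vectors
`X_k^{(1)},…,X_k^{(n)}, Y_k^{(k)},…,Y_k^{(T)}` are i.i.d.; in particular, conditioned on
`R_{T-1}`, the outputs `X_T^{(1)},…,X_T^{(n)}` are i.i.d. with common conditional law
`μ_T | R_{T-1}` (the conditional law of `X_T^{(1)}`). -/
theorem statement0
    {Ω : Type*} [MeasurableSpace Ω] (P : Measure Ω) [IsProbabilityMeasure P]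
    (d m n T : ℕ) (η σ : ℝ) (hη : 0 < η) (hσ : 0 < σ)
    (μ₀ : Measure (EucSp d)) (hμ₀ : MemP2 μ₀)
    (ν : Measure (EucSp m)) (hν : IsProbabilityMeasure ν)
    (G : EucSp d → EucSp d → EucSp m → EucSp d)
    (hGmeas : Measurable fun p : EucSp d × EucSp d × EucSp m => G p.1 p.2.1 p.2.2)
    (X0 Y0 : ℕ → Ω → EucSp d) (Ξ : ℕ → Ω → EucSp m) (Z W : ℕ → ℕ → Ω → EucSp d)
    (hmX0 : ∀ i, Measurable (X0 i)) (hmY0 : ∀ j, Measurable (Y0 j))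
    (hmΞ : ∀ k, Measurable (Ξ k)) (hmZ : ∀ k i, Measurable (Z k i))
    (hmW : ∀ k j, Measurable (W k j))
    (hlX0 : ∀ i, P.map (X0 i) = μ₀) (hlY0 : ∀ j, P.map (Y0 j) = μ₀)
    (hlΞ : ∀ k, P.map (Ξ k) = ν)
    (hlZ : ∀ k i, P.map (Z k i) = stdGaussianE d 1)
    (hlW : ∀ k j, P.map (W k j) = stdGaussianE d 1)
    (hindep : iIndepFun (m := algMS d m) (algFam X0 Y0 Ξ Z W) P) :
    (∀ k ≤ T,
      ∀ᵐ ω ∂P,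
        condDistrib
          (fun ω => Sum.elim (fun i : Fin n => Xalg η σ G X0 Y0 Ξ Z W k i ω)
            (fun j : Fin (T + 1 - k) => Yalg η σ G Y0 Ξ W k (k + (j : ℕ)) ω))
          (Rvar η σ G Y0 Ξ W k) P (Rvar η σ G Y0 Ξ W k ω)
          = Measure.pi (fun _ : Fin n ⊕ Fin (T + 1 - k) =>
              condDistrib (Xalg η σ G X0 Y0 Ξ Z W k 0) (Rvar η σ G Y0 Ξ W k) P
                (Rvar η σ G Y0 Ξ W k ω)))
    ∧
    (∀ᵐ ω ∂P,
      condDistrib (fun ω => fun i : Fin n => Xalg η σ G X0 Y0 Ξ Z W T i ω)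
        (Rvar η σ G Y0 Ξ W T) P (Rvar η σ G Y0 Ξ W T ω)
        = Measure.pi (fun _ : Fin n =>
            condDistrib (Xalg η σ G X0 Y0 Ξ Z W T 0) (Rvar η σ G Y0 Ξ W T) P
              (Rvar η σ G Y0 Ξ W T ω))) :=
  statement0_general P d m n T η σ μ₀ G hGmeas X0 Y0 Ξ Z W hmX0 hmY0 hmΞ hmZ hmW hlX0 hlY0 hlZ hlW
    hindep

end
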